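/- Let F2 = k⟨X,Y⟩ be the free associative algebra on X, Y, let I2 be the span of all words of the form w X w' Y w'', and identify F2/I2 with k[X̄,Ȳ] via Y^b X^a ↦ X̄^a Ȳ^b. Then for k, ℓ ≥ 1, the image in k[X̄,Ȳ] of P_{kℓ} = ad(X)^{k−1} ad(Y)^{ℓ−1}([X,Y]) (viewed in F2 via Lie brackets [a,b] = ab − ba) is (−1)^k X̄^k Ȳ^ℓ. -/
import Mathlib

open FreeAlgebra

/-- The word associated to a list of letters, in the free algebra. -/
noncomputable def wordOf (k : Type*) [Field k] {n : ℕ} (l : List (Fin n)) : FreeAlgebra k (Fin n) :=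
  (l.map (FreeAlgebra.ι k)).prod

section aux
variable (k : Type*) [Field k]

def S2 : Set (FreeAlgebra k (Fin 2)) :=
  {c | ∃ w w' w'' : List (Fin 2),
      c = wordOf k w * ι k 0 * wordOf k w' * ι k 1 * wordOf k w''}

lemma wordOf_nil : wordOf k ([] : List (Fin 2)) = 1 := rfl

lemma wordOf_cons (i : Fin 2) (l : List (Fin 2)) :
    wordOf k (i :: l) = ι k i * wordOf k l := by simp [wordOf]

lemma wordOf_append (l l' : List (Fin 2)) :
    wordOf k (l ++ l') = wordOf k l * wordOf k l' := by simp [wordOf]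

lemma wordOf_replicate (n : ℕ) (i : Fin 2) :
    wordOf k (List.replicate n i) = (ι k i) ^ n := by
  induction n with
  | zero => simp [wordOf]
  | succ m ih => rw [List.replicate_succ, wordOf_cons, ih, pow_succ']

lemma mulLeft_mem (i : Fin 2) {x : FreeAlgebra k (Fin 2)}
    (hx : x ∈ Submodule.span k (S2 k)) : ι k i * x ∈ Submodule.span k (S2 k) := by
  induction hx using Submodule.span_induction with
  | mem c hc =>
    obtain ⟨w, w', w'', rfl⟩ := hc
    exact Submodule.subset_span ⟨i :: w, w', w'', by rw [wordOf_cons]; noncomm_ring⟩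
  | zero => simp
  | add x y _ _ hx hy => rw [mul_add]; exact add_mem hx hy
  | smul c x _ hx => rw [mul_smul_comm]; exact Submodule.smul_mem _ _ hx

lemma mulRight_mem (i : Fin 2) {x : FreeAlgebra k (Fin 2)}
    (hx : x ∈ Submodule.span k (S2 k)) : x * ι k i ∈ Submodule.span k (S2 k) := by
  induction hx using Submodule.span_induction with
  | mem c hc =>
    obtain ⟨w, w', w'', rfl⟩ := hc
    refine Submodule.subset_span ⟨w, w', w'' ++ [i], ?_⟩
    rw [wordOf_append, wordOf_cons, wordOf_nil]; noncomm_ring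
  | zero => simp
  | add x y _ _ hx hy => rw [add_mul]; exact add_mem hx hy
  | smul c x _ hx => rw [smul_mul_assoc]; exact Submodule.smul_mem _ _ hx

lemma genXY : (ι k 0 : FreeAlgebra k (Fin 2)) * ι k 1 ∈ Submodule.span k (S2 k) :=
  Submodule.subset_span ⟨[], [], [], by simp [wordOf_nil]⟩

lemma genY (j : ℕ) :
    (ι k 1 : FreeAlgebra k (Fin 2)) ^ j * ι k 0 * ι k 1 ∈ Submodule.span k (S2 k) :=
  Submodule.subset_span ⟨List.replicate j 1, [], [],
    by simp [wordOf_replicate, wordOf_nil]⟩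

lemma genX (j i : ℕ) :
    (ι k 0 : FreeAlgebra k (Fin 2)) * ((ι k 1) ^ (j + 1) * (ι k 0) ^ i) ∈
      Submodule.span k (S2 k) :=
  Submodule.subset_span ⟨[], [], List.replicate j 1 ++ List.replicate i 0,
    by simp [wordOf_append, wordOf_replicate, wordOf_nil, pow_succ', mul_assoc]⟩

lemma adIter {A : Type*} [Ring A] (y z : A) (j : ℕ) :
    (fun v => y * v - v * y)^[j + 1] z =
      y * ((fun v => y * v - v * y)^[j] z) - ((fun v => y * v - v * y)^[j] z) * y := by
  rw [Function.iterate_succ_apply']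

end aux

theorem stmt13 (k : Type*) [Field k] [CharZero k] (a b : ℕ) (ha : 1 ≤ a) (hb : 1 ≤ b) :
    let F2 := FreeAlgebra k (Fin 2)
    let Xv : F2 := ι k 0
    let Yv : F2 := ι k 1
    let ad : F2 → F2 → F2 := fun u v => u * v - v * u
    let P : F2 := (ad Xv)^[a - 1] ((ad Yv)^[b - 1] (Xv * Yv - Yv * Xv))
    let I2 : Submodule k F2 :=
      Submodule.span k {c | ∃ w w' w'' : List (Fin 2),
        c = wordOf k w * ι k 0 * wordOf k w' * ι k 1 * wordOf k w''}
    P - ((-1 : k) ^ a) • (Yv ^ b * Xv ^ a) ∈ I2 := by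
  intro F2 Xv Yv ad P I2
  have h1 : ∀ j : ℕ,
      (fun v => Yv * v - v * Yv)^[j] (Xv * Yv - Yv * Xv) + Yv ^ (j + 1) * Xv ∈
        Submodule.span k (S2 k) := by
    intro j
    induction j with
    | zero =>
      have e : (fun v => Yv * v - v * Yv)^[0] (Xv * Yv - Yv * Xv) + Yv ^ (0 + 1) * Xv
          = Xv * Yv := by
        simp only [Function.iterate_zero_apply, zero_add, pow_one]
        noncomm_ring
      rw [e]; exact genXY k
    | succ j ih =>
      rw [adIter]
      set q := (fun v => Yv * v - v * Yv)^[j] (Xv * Yv - Yv * Xv) with hq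
      have key : ∀ u : F2, Yv * q - q * Yv + Yv * u
          = Yv * (q + u) - (q + u) * Yv + u * Yv := by
        intro u; noncomm_ring
      have e : Yv ^ (j + 1 + 1) * Xv = Yv * (Yv ^ (j + 1) * Xv) := by
        rw [pow_succ', mul_assoc]
      rw [e, key]
      exact add_mem (sub_mem (mulLeft_mem k 1 ih) (mulRight_mem k 1 ih)) (genY k (j + 1))
  have hb' : b - 1 + 1 = b := Nat.succ_pred_eq_of_pos hb
  have h2 : ∀ i : ℕ,
      (fun v => Xv * v - v * Xv)^[i] ((fun v => Yv * v - v * Yv)^[b - 1] (Xv * Yv - Yv * Xv))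
        + ((-1 : k) ^ i) • (Yv ^ b * Xv ^ (i + 1)) ∈ Submodule.span k (S2 k) := by
    intro i
    induction i with
    | zero =>
      simp only [Function.iterate_zero_apply, pow_zero, one_smul, zero_add, pow_one]
      have := h1 (b - 1)
      rwa [hb'] at this
    | succ i ih =>
      rw [adIter]
      set r := (fun v => Xv * v - v * Xv)^[i]
        ((fun v => Yv * v - v * Yv)^[b - 1] (Xv * Yv - Yv * Xv)) with hr
      have key : ∀ (u : F2) (c : k), Xv * r - r * Xv + (-c) • (u * Xv)
          = Xv * (r + c • u) - (r + c • u) * Xv - c • (Xv * u) := by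
        intro u c
        simp only [mul_add, add_mul, mul_smul_comm, smul_mul_assoc, neg_smul]
        module
      have e1 : Yv ^ b * Xv ^ (i + 1 + 1) = (Yv ^ b * Xv ^ (i + 1)) * Xv := by
        rw [pow_succ, mul_assoc]
      have e2 : ((-1 : k)) ^ (i + 1) = -((-1 : k) ^ i) := by ring
      rw [e1, e2, key]
      obtain ⟨b', rfl⟩ : ∃ b', b = b' + 1 := ⟨b - 1, hb'.symm⟩
      exact sub_mem (sub_mem (mulLeft_mem k 0 ih) (mulRight_mem k 0 ih))
        (Submodule.smul_mem _ _ (genX k b' (i + 1)))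
  show (fun v => Xv * v - v * Xv)^[a - 1]
      ((fun v => Yv * v - v * Yv)^[b - 1] (Xv * Yv - Yv * Xv))
      - ((-1 : k) ^ a) • (Yv ^ b * Xv ^ a) ∈ Submodule.span k (S2 k)
  have ha' : a - 1 + 1 = a := Nat.succ_pred_eq_of_pos ha
  rw [← ha', pow_succ]
  have := h2 (a - 1)
  simpa [mul_neg_one, neg_smul, sub_neg_eq_add] using this
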